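/- Let s ∈ (0,1) and γ > 0. At every τ ∈ ℝ^{d×d}_s with τ^D ≠ 0, the smoothed von Mises resolvent R_s is Fréchet differentiable with derivative R_s'(τ)h = h − max_s'(1 − γ/|τ^D|)·(γ/|τ^D|³)·(τ^D : h^D)·τ^D − max_s(1 − γ/|τ^D|)·h^D for all h ∈ ℝ^{d×d}_s. -/

import Mathlib

open scoped Classical

/-- The Frobenius inner product `σ : τ = trace (σ τ)` on (symmetric) matrices. -/
noncomputable def frob {d : ℕ} (A B : Matrix (Fin d) (Fin d) ℝ) : ℝ :=
  Matrix.trace (A * B)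

/-- The norm induced by the Frobenius inner product (on symmetric matrices). -/
noncomputable def fnorm {d : ℕ} (A : Matrix (Fin d) (Fin d) ℝ) : ℝ :=
  Real.sqrt (frob A A)

/-- The deviator `τ^D = τ - (trace τ / d) • I`. -/
noncomputable def dev {d : ℕ} (A : Matrix (Fin d) (Fin d) ℝ) : Matrix (Fin d) (Fin d) ℝ :=
  A - (Matrix.trace A / (d : ℝ)) • (1 : Matrix (Fin d) (Fin d) ℝ)

/-- The smoothed max function `max_s`. -/
noncomputable def maxs (s r : ℝ) : ℝ :=
  if s ≤ |r| then max 0 r else (r + s) ^ 2 / (4 * s)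

/-- The smoothed von Mises resolvent `R_s`. -/
noncomputable def Rs {d : ℕ} (s γ : ℝ) (τ : Matrix (Fin d) (Fin d) ℝ) :
    Matrix (Fin d) (Fin d) ℝ :=
  if dev τ = 0 then τ else τ - maxs s (1 - γ / fnorm (dev τ)) • dev τ

/-- The derivative of the smoothed max function. -/
noncomputable def maxs' (s r : ℝ) : ℝ :=
  if r ≤ -s then 0 else if r < s then (r + s) / (2 * s) else 1

attribute [local instance] Matrix.frobeniusSeminormedAddCommGroup
  Matrix.frobeniusNormedAddCommGroup Matrix.frobeniusIsBoundedSMul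
  Matrix.frobeniusNormedSpace

/-!
Near a point with `τ^D ≠ 0` the resolvent is `A ↦ A - max_s(1 - γ/|A^D|) • A^D`, so the claim is
the chain rule once its ingredients are differentiable. The smoothed max is `C¹` because
`max_s r = (max(0, r + s)² - max(0, r - s)²) / (4s)`, and `max(0, ·)²` is `C¹`. The norm
`|A^D| = √(A^D : A^D)` is differentiable wherever `A^D : A^D > 0`; this is where symmetry of `τ`
enters, since `A : A` is a sum of squares only for symmetric `A`.
-/

open Filter Set Topology Matrix

theorem hasDerivAt_max_zero_sq (x : ℝ) : HasDerivAt (fun y => max 0 y ^ 2) (2 * max 0 x) x := by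
  rcases lt_trichotomy x 0 with hx | rfl | hx
  · have hzero : (fun y : ℝ => max 0 y ^ 2) =ᶠ[𝓝 x] fun _ => 0 := by
      filter_upwards [Iio_mem_nhds hx] with y hy
      simp [max_eq_left (show y < 0 from hy).le]
    simpa [max_eq_left hx.le] using (hasDerivAt_const x (0 : ℝ)).congr_of_eventuallyEq hzero
  · have hneg : HasDerivWithinAt (fun y : ℝ => max 0 y ^ 2) 0 (Iic 0) 0 :=
      (hasDerivWithinAt_const 0 _ 0).congr
        (fun y hy => by simp [max_eq_left (show y ≤ 0 from hy)]) (by simp)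
    have hpos : HasDerivWithinAt (fun y : ℝ => max 0 y ^ 2) 0 (Ici 0) 0 := by
      simpa using ((hasDerivAt_pow 2 (0 : ℝ)).hasDerivWithinAt (s := Ici 0)).congr
        (fun y hy => by simp [max_eq_right (show 0 ≤ y from hy)]) (by simp)
    simpa [Iic_union_Ici] using hneg.union hpos
  · have hsq : (fun y : ℝ => max 0 y ^ 2) =ᶠ[𝓝 x] fun y => y ^ 2 := by
      filter_upwards [Ioi_mem_nhds hx] with y hy
      simp [max_eq_right (show 0 < y from hy).le]
    simpa [max_eq_right hx.le] using (hasDerivAt_pow 2 x).congr_of_eventuallyEq hsq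

section SmoothedMax

variable {s : ℝ}

lemma maxs_eq_sub_max_zero_sq (hs : 0 < s) (r : ℝ) :
    maxs s r = (max 0 (r + s) ^ 2 - max 0 (r - s) ^ 2) / (4 * s) := by
  unfold maxs
  rcases le_or_gt r (-s) with h | h
  · rw [if_pos (by rw [abs_of_neg (by linarith)]; linarith), max_eq_left (by linarith),
      max_eq_left (by linarith : r + s ≤ 0), max_eq_left (by linarith : r - s ≤ 0)]
    simp
  rcases lt_or_ge r s with h' | h'
  · rw [if_neg (by rw [not_le, abs_lt]; exact ⟨h, h'⟩), max_eq_right (by linarith : 0 ≤ r + s),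
      max_eq_left (by linarith : r - s ≤ 0)]
    ring
  · rw [if_pos (by rw [abs_of_pos (by linarith)]; linarith), max_eq_right (by linarith),
      max_eq_right (by linarith : 0 ≤ r + s), max_eq_right (by linarith : 0 ≤ r - s)]
    field_simp
    ring

theorem hasDerivAt_maxs (hs : 0 < s) (r : ℝ) : HasDerivAt (maxs s) (maxs' s r) r := by
  have hplus := (hasDerivAt_max_zero_sq (r + s)).comp r ((hasDerivAt_id r).add_const s)
  have hminus := (hasDerivAt_max_zero_sq (r - s)).comp r ((hasDerivAt_id r).sub_const s)
  have hsmooth : HasDerivAt (fun y => (max 0 (y + s) ^ 2 - max 0 (y - s) ^ 2) / (4 * s))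
      ((2 * max 0 (r + s) - 2 * max 0 (r - s)) / (4 * s)) r := by
    simpa [Function.comp_def] using (hplus.sub hminus).div_const (4 * s)
  rw [show maxs s = _ from funext (maxs_eq_sub_max_zero_sq hs)]
  refine hsmooth.congr_deriv ?_
  unfold maxs'
  split_ifs with h₁ h₂
  · rw [max_eq_left (by linarith : r + s ≤ 0), max_eq_left (by linarith : r - s ≤ 0)]
    simp
  · rw [max_eq_right (by linarith : 0 ≤ r + s), max_eq_left (by linarith : r - s ≤ 0)]
    field_simp
    ring
  · rw [max_eq_right (by linarith : 0 ≤ r + s), max_eq_right (by linarith : 0 ≤ r - s)]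
    field_simp
    ring

end SmoothedMax

section Deviator

variable {d : ℕ}

lemma dev_add (A B : Matrix (Fin d) (Fin d) ℝ) : dev (A + B) = dev A + dev B := by
  simp only [dev, trace_add, add_div, add_smul]
  abel

lemma dev_smul (c : ℝ) (A : Matrix (Fin d) (Fin d) ℝ) : dev (c • A) = c • dev A := by
  simp only [dev, trace_smul, smul_eq_mul, mul_div_assoc, smul_sub, smul_smul]

noncomputable def devCLM (d : ℕ) : Matrix (Fin d) (Fin d) ℝ →L[ℝ] Matrix (Fin d) (Fin d) ℝ :=
  LinearMap.toContinuousLinearMap { toFun := dev, map_add' := dev_add, map_smul' := dev_smul }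

@[simp] lemma devCLM_apply (A : Matrix (Fin d) (Fin d) ℝ) : devCLM d A = dev A := rfl

lemma Matrix.IsSymm.dev {A : Matrix (Fin d) (Fin d) ℝ} (hA : A.IsSymm) : (_root_.dev A).IsSymm :=
  hA.sub (isSymm_one.smul _)

noncomputable def frobCLM (d : ℕ) :
    Matrix (Fin d) (Fin d) ℝ →L[ℝ] Matrix (Fin d) (Fin d) ℝ →L[ℝ] ℝ :=
  ((LinearMap.mul ℝ (Matrix (Fin d) (Fin d) ℝ)).compr₂
    (traceLinearMap (Fin d) ℝ ℝ)).toContinuousBilinearMap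

@[simp] lemma frobCLM_apply (A B : Matrix (Fin d) (Fin d) ℝ) : frobCLM d A B = frob A B := rfl

lemma frob_comm (A B : Matrix (Fin d) (Fin d) ℝ) : frob A B = frob B A :=
  trace_mul_comm A B

lemma frob_self_pos_of_isSymm {A : Matrix (Fin d) (Fin d) ℝ} (hA : A.IsSymm) (h0 : A ≠ 0) :
    0 < frob A A := by
  have hA' : Aᴴ = A := by rw [conjTranspose_eq_transpose_of_trivial]; exact hA
  have hnonneg := (posSemidef_conjTranspose_mul_self A).trace_nonneg
  have hne := trace_conjTranspose_mul_self_eq_zero_iff.not.mpr h0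
  rw [hA'] at hnonneg hne
  exact lt_of_le_of_ne hnonneg (Ne.symm hne)

lemma hasFDerivAt_fnorm_dev {τ : Matrix (Fin d) (Fin d) ℝ} (hpos : 0 < frob (dev τ) (dev τ)) :
    HasFDerivAt (fun A => fnorm (dev A))
      ((fnorm (dev τ))⁻¹ • (frobCLM d (dev τ)).comp (devCLM d)) τ := by
  have hsq : HasFDerivAt (fun A => frob (dev A) (dev A))
      ((2 : ℝ) • (frobCLM d (dev τ)).comp (devCLM d)) τ := by
    refine ((frobCLM d).hasFDerivAt_of_bilinear (devCLM d).hasFDerivAt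
      (devCLM d).hasFDerivAt).congr_fderiv (ContinuousLinearMap.ext fun h => ?_)
    change frob (dev τ) (dev h) + frob (dev h) (dev τ) = 2 * frob (dev τ) (dev h)
    rw [frob_comm (dev h)]
    ring
  refine (hsq.sqrt hpos.ne').congr_fderiv (ContinuousLinearMap.ext fun h => ?_)
  have hn : 0 < fnorm (dev τ) := Real.sqrt_pos.mpr hpos
  change 1 / (2 * fnorm (dev τ)) * (2 * frob (dev τ) (dev h))
    = (fnorm (dev τ))⁻¹ * frob (dev τ) (dev h)
  field_simp

end Deviator

section Resolvent

variable {d : ℕ} {s γ : ℝ}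

lemma Rs_eventuallyEq {τ : Matrix (Fin d) (Fin d) ℝ} (hdev : dev τ ≠ 0) :
    Rs s γ =ᶠ[𝓝 τ] fun A => A - maxs s (1 - γ / fnorm (dev A)) • dev A := by
  filter_upwards [(devCLM d).continuous.continuousAt.eventually_ne hdev] with A hA
  simp [Rs, show dev A ≠ 0 from hA]

noncomputable def Rs' (s γ : ℝ) (τ : Matrix (Fin d) (Fin d) ℝ) :
    Matrix (Fin d) (Fin d) ℝ →L[ℝ] Matrix (Fin d) (Fin d) ℝ :=
  1 - (maxs' s (1 - γ / fnorm (dev τ)) * (γ / fnorm (dev τ) ^ 3)) •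
      ((frobCLM d (dev τ)).comp (devCLM d)).smulRight (dev τ)
    - maxs s (1 - γ / fnorm (dev τ)) • devCLM d

lemma Rs'_apply (τ h : Matrix (Fin d) (Fin d) ℝ) :
    Rs' s γ τ h = h - (maxs' s (1 - γ / fnorm (dev τ)) * (γ / fnorm (dev τ) ^ 3)
      * frob (dev τ) (dev h)) • dev τ - maxs s (1 - γ / fnorm (dev τ)) • dev h := by
  simp [Rs', smul_smul]

theorem hasFDerivAt_Rs (hs : 0 < s) {τ : Matrix (Fin d) (Fin d) ℝ}
    (hpos : 0 < frob (dev τ) (dev τ)) : HasFDerivAt (Rs s γ) (Rs' s γ τ) τ := by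
  have hdev : dev τ ≠ 0 := fun h => by simp [h, frob] at hpos
  set n := fnorm (dev τ)
  have hn : 0 < n := Real.sqrt_pos.mpr hpos
  have hradius : HasDerivAt (fun t => 1 - γ / t) (γ / n ^ 2) n := by
    simpa [div_eq_mul_inv] using ((hasDerivAt_inv hn.ne').const_mul γ).const_sub 1
  have hcoef := (hasDerivAt_maxs hs _).comp_hasFDerivAt τ
    (hradius.comp_hasFDerivAt τ (hasFDerivAt_fnorm_dev hpos))
  have hid := (1 : Matrix (Fin d) (Fin d) ℝ →L[ℝ] Matrix (Fin d) (Fin d) ℝ).hasFDerivAt (x := τ)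
  -- `rw [Rs'_apply]` fails here: the two sides use different (defeq) topologies on matrices
  refine ((hid.sub (hcoef.smul (devCLM d).hasFDerivAt)).congr_of_eventuallyEq
    (Rs_eventuallyEq hdev)).congr_fderiv
    (ContinuousLinearMap.ext fun h => (Eq.trans ?_ (Rs'_apply τ h).symm))
  change h - (maxs s (1 - γ / n) • dev h
    + (maxs' s (1 - γ / n) * (γ / n ^ 2 * (n⁻¹ * frob (dev τ) (dev h)))) • dev τ) = _
  module

end Resolvent

theorem smoothed_resolvent_frechet_differentiable_general
    (d : ℕ) (s : ℝ) (hs : s ∈ Set.Ioo (0 : ℝ) 1) (γ : ℝ)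
    (τ : Matrix (Fin d) (Fin d) ℝ) (hτ : τ.IsSymm) (hdev : dev τ ≠ 0) :
    ∃ L : Matrix (Fin d) (Fin d) ℝ →L[ℝ] Matrix (Fin d) (Fin d) ℝ,
      (∀ h : Matrix (Fin d) (Fin d) ℝ, h.IsSymm →
        L h = h - (maxs' s (1 - γ / fnorm (dev τ)) * (γ / fnorm (dev τ) ^ 3)
                    * frob (dev τ) (dev h)) • dev τ
                - maxs s (1 - γ / fnorm (dev τ)) • dev h) ∧
      HasFDerivWithinAt (Rs s γ) L {A : Matrix (Fin d) (Fin d) ℝ | A.IsSymm} τ :=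
  ⟨Rs' s γ τ, fun h _ => Rs'_apply τ h,
    (hasFDerivAt_Rs hs.1 (frob_self_pos_of_isSymm hτ.dev hdev)).hasFDerivWithinAt⟩

/-- Let `s ∈ (0,1)` and `γ > 0`.  At every symmetric `τ` with `τ^D ≠ 0`, the smoothed
von Mises resolvent `R_s` is Fréchet differentiable (as a map on the subspace of
symmetric matrices) with derivative
`h ↦ h - max_s'(1-γ/|τ^D|)·(γ/|τ^D|³)·(τ^D : h^D)·τ^D - max_s(1-γ/|τ^D|)·h^D`. -/
theorem smoothed_resolvent_frechet_differentiable
    (d : ℕ) (hd : 0 < d) (s : ℝ) (hs : s ∈ Set.Ioo (0 : ℝ) 1) (γ : ℝ) (hγ : 0 < γ)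
    (τ : Matrix (Fin d) (Fin d) ℝ) (hτ : τ.IsSymm) (hdev : dev τ ≠ 0) :
    ∃ L : Matrix (Fin d) (Fin d) ℝ →L[ℝ] Matrix (Fin d) (Fin d) ℝ,
      (∀ h : Matrix (Fin d) (Fin d) ℝ, h.IsSymm →
        L h = h - (maxs' s (1 - γ / fnorm (dev τ)) * (γ / fnorm (dev τ) ^ 3)
                    * frob (dev τ) (dev h)) • dev τ
                - maxs s (1 - γ / fnorm (dev τ)) • dev h) ∧
      HasFDerivWithinAt (Rs s γ) L {A : Matrix (Fin d) (Fin d) ℝ | A.IsSymm} τ :=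
  smoothed_resolvent_frechet_differentiable_general d s hs γ τ hτ hdev
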